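/- arXiv:1906.06651 — 5 statements merged into one kernel-verified Lean document; each statement's English description precedes it below -/
import Mathlib

section
/- Let b be a basis of ℝⁿ with ℤ-span L a full-rank lattice, let D be the fundamental parallelepiped of b, and let fract_b(x) ∈ D denote the unique representative of x modulo L lying in D. Then for every nonempty finite set S ⊆ ℝⁿ there exists a fixed dither d ∈ D such that (1/|S|) ∑_{v ∈ S} ‖fract_b(v − d)‖² ≤ (1/vol(D)) ∫_D ‖x‖² dx. In particular, applying this to the scaled basis 2^m·b, a uniform random variable V over any complete set of coset representatives of Λ/2^mΛ admits a fixed dither d with (1/n)·E[‖fract(V − d)‖²] ≤ σ²(2^mΛ), the second moment per dimension of the coarse lattice 2^mΛ. -/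
/-!
Average over the dither. The map `x ↦ v - x` preserves Lebesgue measure and carries the
parallelepiped `D` onto another fundamental domain of the lattice, while `‖fract b ·‖²` is
lattice-periodic; hence the mean of `‖fract b (v - d)‖²` over `d ∈ D` equals the mean of `‖x‖²`
over `D` for every `v`. Summing over `S`, the mean over `d` of the total is `|S|` times the second
moment, and some `d ∈ D` does no worse than the mean.
-/

open MeasureTheory ZSpan

namespace ZSpan
open Submodule Set

variable {E ι F : Type*} [NormedAddCommGroup E] [NormedSpace ℝ E] [MeasurableSpace E] [BorelSpace E]
  [NormedAddCommGroup F] [Fintype ι] (b : Module.Basis ι ℝ E) (μ : Measure E)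

instance : Countable (span ℤ (range b)).toAddSubgroup :=
  inferInstanceAs (Countable (span ℤ (range b)))

section Invariant

variable [μ.IsAddLeftInvariant] [μ.IsNegInvariant]

theorem isAddFundamentalDomain_sub_image (v : E) :
    IsAddFundamentalDomain (span ℤ (range b)).toAddSubgroup ((v - ·) '' fundamentalDomain b) μ := by
  refine (ZSpan.isAddFundamentalDomain' b μ).image_of_equiv (Equiv.subLeft v) ?_ (Equiv.neg _)
    fun g x => ?_
  · rw [Equiv.symm_subLeft]
    exact (μ.measurePreserving_sub_left v).quasiMeasurePreserving
  · show v - (-(g : E) + x) = (g : E) + (v - x)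
    abel

theorem integrableOn_comp_fract_sub_iff {f : E → F} (v : E) :
    IntegrableOn (fun x => f (fract b (v - x))) (fundamentalDomain b) μ ↔
      IntegrableOn f (fundamentalDomain b) μ :=
  calc IntegrableOn (fun x => f (fract b (v - x))) (fundamentalDomain b) μ
      ↔ IntegrableOn (f ∘ fract b) ((v - ·) '' fundamentalDomain b) μ :=
        ((μ.measurePreserving_sub_left v).integrableOn_image
          (MeasurableEquiv.subLeft v).measurableEmbedding (f := f ∘ fract b)).symm
    _ ↔ IntegrableOn (f ∘ fract b) (fundamentalDomain b) μ :=
        (isAddFundamentalDomain_sub_image b μ v).integrableOn_iff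
          (ZSpan.isAddFundamentalDomain' b μ) fun g y => congrArg f (fract_zSpan_add b y g.2)
    _ ↔ IntegrableOn f (fundamentalDomain b) μ :=
        integrableOn_congr_fun (fun _ hx => congrArg f (fract_eq_self.2 hx))
          (fundamentalDomain_measurableSet b)

theorem setIntegral_comp_fract_sub [NormedSpace ℝ F] (f : E → F) (v : E) :
    ∫ x in fundamentalDomain b, f (fract b (v - x)) ∂μ = ∫ x in fundamentalDomain b, f x ∂μ :=
  calc ∫ x in fundamentalDomain b, f (fract b (v - x)) ∂μ
      = ∫ y in (v - ·) '' fundamentalDomain b, f (fract b y) ∂μ :=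
        ((μ.measurePreserving_sub_left v).setIntegral_image_emb
          (MeasurableEquiv.subLeft v).measurableEmbedding (f ∘ fract b) _).symm
    _ = ∫ y in fundamentalDomain b, f (fract b y) ∂μ :=
        (isAddFundamentalDomain_sub_image b μ v).setIntegral_eq (ZSpan.isAddFundamentalDomain' b μ)
          fun g y => congrArg f (fract_zSpan_add b y g.2)
    _ = ∫ x in fundamentalDomain b, f x ∂μ :=
        setIntegral_congr_fun (fundamentalDomain_measurableSet b)
          fun _ hx => congrArg f (fract_eq_self.2 hx)

end Invariant

theorem exists_mem_fundamentalDomain_sum_comp_fract_sub_le [FiniteDimensional ℝ E]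
    [μ.IsAddHaarMeasure] {f : E → ℝ} (hf : IntegrableOn f (fundamentalDomain b) μ)
    (S : Finset E) :
    ∃ d ∈ fundamentalDomain b,
      ∑ v ∈ S, f (fract b (v - d)) ≤ S.card * ⨍ x in fundamentalDomain b, f x ∂μ := by
  have hterm (v : E) : IntegrableOn (fun x => f (fract b (v - x))) (fundamentalDomain b) μ :=
    (integrableOn_comp_fract_sub_iff b μ v).2 hf
  obtain ⟨d, hd, hle⟩ := exists_le_setAverage (measure_fundamentalDomain_ne_zero b)
    (fundamentalDomain_isBounded b).measure_lt_top.ne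
    (integrable_finsetSum S fun v _ => hterm v)
  refine ⟨d, hd, hle.trans_eq ?_⟩
  simp only [setAverage_eq, integral_finsetSum S fun v _ => hterm v, setIntegral_comp_fract_sub,
    Finset.sum_const, smul_eq_mul, nsmul_eq_mul]
  ring

end ZSpan

/-- **Existence of a good fixed dither (Lemma B.2 of the thesis).**
Let `b` be a basis of `ℝⁿ` with `ℤ`-span a full-rank lattice, let `D` be the fundamental
parallelepiped of `b`, and let `fract b x ∈ D` denote the representative of `x` modulo the
lattice lying in `D`.  Then for every nonempty finite set `S ⊆ ℝⁿ` there exists a fixed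
dither `d ∈ D` such that
`(1/|S|) ∑_{v ∈ S} ‖fract b (v − d)‖² ≤ (1/vol D) ∫_D ‖x‖² dx`. -/
theorem exists_good_dither {n : ℕ}
    (b : Module.Basis (Fin n) ℝ (EuclideanSpace ℝ (Fin n)))
    (S : Finset (EuclideanSpace ℝ (Fin n))) (hS : S.Nonempty) :
    ∃ d ∈ ZSpan.fundamentalDomain b,
      (S.card : ℝ)⁻¹ * ∑ v ∈ S, ‖ZSpan.fract b (v - d)‖ ^ 2
        ≤ (volume (ZSpan.fundamentalDomain b)).toReal⁻¹ *
            ∫ x in ZSpan.fundamentalDomain b, ‖x‖ ^ 2 := by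
  have hsq : IntegrableOn (fun x => ‖x‖ ^ 2) (fundamentalDomain b) :=
    (continuous_norm.pow 2).continuousOn.integrableOn_compact
      (fundamentalDomain_isBounded b).isCompact_closure |>.mono_set subset_closure
  obtain ⟨d, hd, hle⟩ := exists_mem_fundamentalDomain_sum_comp_fract_sub_le b volume hsq S
  refine ⟨d, hd, ?_⟩
  rw [inv_mul_le_iff₀ (by exact_mod_cast hS.card_pos)]
  rwa [setAverage_eq, measureReal_def, smul_eq_mul] at hle
end

section
/- Let n ≥ 1 be an integer, let ψ > 0 and V > 0 be real numbers (the normalized second moment and the volume of the base lattice), let m₁, m₂, n₁ be nonnegative integers with m₁ + m₂ ≤ n₁, let S be a real number with S > 4^{n₁ − 1} (the SNR of user 1), and let P be a real number with 0 < P ≤ n · 4^{m₁+m₂} · V^{2/n} · ψ (the average power of the combined constellation). Set β² = n/P. Then S·β² > 1/(4·V^{2/n}·ψ), and consequently 1 + (1/2)·log₂(2πe·((S·β²)^{-1}·V^{−2/n} + ψ)) < 1 + (1/2)·log₂(2πe·5ψ). That is, the gap of the strong user's achievable rate to the multiuser capacity is less than 1 + (1/2)log₂(2πe·5ψ(Λ))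 bits per real dimension, independent of the SNR. -/
open Real

/-- **Gap of the strong user to the multiuser capacity (Δ₁ part of Proposition 5.1).**
Let `n ≥ 1`, `ψ > 0`, `V > 0`, `m₁ m₂ n₁ : ℕ` with `m₁ + m₂ ≤ n₁`, `S > 4^(n₁−1)`,
`0 < P ≤ n·4^(m₁+m₂)·V^(2/n)·ψ`, and `β² = n/P`.  Then `S·β² > 1/(4·V^(2/n)·ψ)` and
`1 + ½·log₂(2πe·((S·β²)⁻¹·V^(−2/n) + ψ)) < 1 + ½·log₂(2πe·5ψ)`. -/
theorem strong_user_gap_bound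
    (n : ℕ) (hn : 1 ≤ n) (ψ V : ℝ) (hψ : 0 < ψ) (hV : 0 < V)
    (m₁ m₂ n₁ : ℕ) (hm : m₁ + m₂ ≤ n₁)
    (S : ℝ) (hS : S > (4 : ℝ) ^ ((n₁ : ℝ) - 1))
    (P : ℝ) (hP0 : 0 < P)
    (hP : P ≤ (n : ℝ) * 4 ^ (m₁ + m₂) * V ^ ((2 : ℝ) / n) * ψ)
    (β : ℝ) (hβ : β ^ 2 = (n : ℝ) / P) :
    S * β ^ 2 > 1 / (4 * V ^ ((2 : ℝ) / n) * ψ) ∧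
    1 + (1 / 2) * Real.logb 2
        (2 * π * Real.exp 1 * ((S * β ^ 2)⁻¹ * V ^ (-(2 : ℝ) / n) + ψ))
      < 1 + (1 / 2) * Real.logb 2 (2 * π * Real.exp 1 * (5 * ψ)) := by
  set W : ℝ := V ^ ((2 : ℝ) / n) with hW
  have hWpos : 0 < W := Real.rpow_pos_of_pos hV _
  have hnpos : (0 : ℝ) < n := by exact_mod_cast hn
  set k : ℕ := m₁ + m₂ with hk
  have hkpow : (0 : ℝ) < (4 : ℝ) ^ k := by positivity
  -- S > 4^k / 4
  have hS4 : S > (4 : ℝ) ^ k / 4 := by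
    have h1 : ((4 : ℝ) ^ ((k : ℝ) - 1)) ≤ (4 : ℝ) ^ ((n₁ : ℝ) - 1) := by
      apply Real.rpow_le_rpow_of_exponent_le (by norm_num)
      have : (k : ℝ) ≤ (n₁ : ℝ) := by exact_mod_cast hm
      linarith
    have h2 : (4 : ℝ) ^ ((k : ℝ) - 1) = (4 : ℝ) ^ k / 4 := by
      rw [Real.rpow_sub (by norm_num), Real.rpow_natCast, Real.rpow_one]
    linarith
  -- β² ≥ 1/(4^k W ψ)
  have hβ2 : β ^ 2 ≥ 1 / ((4 : ℝ) ^ k * W * ψ) := by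
    rw [hβ, ge_iff_le, div_le_div_iff₀ (by positivity) hP0]
    calc 1 * P = P := by ring
    _ ≤ (n : ℝ) * 4 ^ k * W * ψ := hP
    _ = (4 : ℝ) ^ k * W * ψ * (n : ℝ) := by ring
    _ = (n:ℝ) * (4 ^ k * W * ψ) := by ring
  have hmain : S * β ^ 2 > 1 / (4 * W * ψ) := by
    have hβ2pos : 0 < β ^ 2 := lt_of_lt_of_le (by positivity) hβ2
    calc S * β ^ 2 ≥ S * (1 / ((4 : ℝ) ^ k * W * ψ)) :=
          mul_le_mul_of_nonneg_left hβ2 (le_of_lt (lt_trans (by positivity) hS4))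
      _ > ((4 : ℝ) ^ k / 4) * (1 / ((4 : ℝ) ^ k * W * ψ)) := by
          apply mul_lt_mul_of_pos_right hS4 (by positivity)
      _ = 1 / (4 * W * ψ) := by field_simp
  refine ⟨hmain, ?_⟩
  have hSβpos : 0 < S * β ^ 2 := lt_trans (by positivity) hmain
  have hVneg : V ^ (-(2 : ℝ) / n) = W⁻¹ := by
    rw [hW, ← Real.rpow_neg (le_of_lt hV), neg_div]
  have harg : (S * β ^ 2)⁻¹ * V ^ (-(2 : ℝ) / n) + ψ < 5 * ψ := by
    rw [hVneg]
    have hinv : (S * β ^ 2)⁻¹ < 4 * W * ψ := by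
      rw [one_div] at hmain
      have := inv_strictAnti₀ (show (0:ℝ) < (4 * W * ψ)⁻¹ by positivity) hmain
      rwa [inv_inv] at this
    have : (S * β ^ 2)⁻¹ * W⁻¹ < 4 * W * ψ * W⁻¹ :=
      mul_lt_mul_of_pos_right hinv (by positivity)
    have h4 : 4 * W * ψ * W⁻¹ = 4 * ψ := by field_simp
    nlinarith
  have hlt : Real.logb 2 (2 * π * Real.exp 1 * ((S * β ^ 2)⁻¹ * V ^ (-(2 : ℝ) / n) + ψ))
      < Real.logb 2 (2 * π * Real.exp 1 * (5 * ψ)) := by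
    apply Real.logb_lt_logb (by norm_num)
    · have : 0 < (S * β ^ 2)⁻¹ * V ^ (-(2 : ℝ) / n) + ψ := by positivity
      have hπ : 0 < π := Real.pi_pos
      positivity
    · have hπ : 0 < π := Real.pi_pos
      apply mul_lt_mul_of_pos_left harg
      positivity
  linarith
end

section
/- Let n ≥ 1 be an integer, let ψ > 0 and V > 0 be real numbers, let m₁, m₂, n₂ be nonnegative integers, and set r₁₂ = max(m₁ + m₂ − n₂, 0). Let S₂ be a real with S₂ > 4^{n₂ − 1}, let P be a real with 0 < P ≤ n · 4^{m₁+m₂} · V^{2/n} · ψ, set β² = n/P, let E₁₂ be a real with 0 ≤ E₁₂ ≤ n · 4^{r₁₂} · V^{2/n} · ψ, and set γ² = n/(S₂·β²·E₁₂ + n). Then γ²·S₂·β²·4^{r₁₂} > 1/(5·V^{2/n}·ψ), and consequently 1 + (1/2)·log₂(2πe·((γ²·S₂·β²·4^{r₁₂})^{-1}·V^{−2/n} + ψ)) < 1 + (1/2)·log₂(2πe·6ψ). That is, the gap of the weak user's achievable rate to the multiuser capacity is less than 1 + (1/2)log₂(2πe·6ψ(Λ)) bits per real dimension. -/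
open Real

set_option maxHeartbeats 1000000 in
/-- **Gap of the weak user to the multiuser capacity (Δ₂ part of Proposition 5.1).**
With `r₁₂ = max(m₁ + m₂ − n₂, 0)`, `S₂ > 4^(n₂−1)`, `0 < P ≤ n·4^(m₁+m₂)·V^(2/n)·ψ`,
`β² = n/P`, `0 ≤ E₁₂ ≤ n·4^(r₁₂)·V^(2/n)·ψ` and `γ² = n/(S₂·β²·E₁₂ + n)`, one has
`γ²·S₂·β²·4^(r₁₂) > 1/(5·V^(2/n)·ψ)` and
`1 + ½·log₂(2πe·((γ²·S₂·β²·4^(r₁₂))⁻¹·V^(−2/n) + ψ)) < 1 + ½·log₂(2πe·6ψ)`. -/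
theorem weak_user_gap_bound
    (n : ℕ) (hn : 1 ≤ n) (ψ V : ℝ) (hψ : 0 < ψ) (hV : 0 < V)
    (m₁ m₂ n₂ : ℕ) (r₁₂ : ℕ) (hr : r₁₂ = m₁ + m₂ - n₂)
    (S₂ : ℝ) (hS₂ : S₂ > (4 : ℝ) ^ ((n₂ : ℝ) - 1))
    (P : ℝ) (hP0 : 0 < P)
    (hP : P ≤ (n : ℝ) * 4 ^ (m₁ + m₂) * V ^ ((2 : ℝ) / n) * ψ)
    (β : ℝ) (hβ : β ^ 2 = (n : ℝ) / P)
    (E₁₂ : ℝ) (hE0 : 0 ≤ E₁₂)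
    (hE : E₁₂ ≤ (n : ℝ) * 4 ^ r₁₂ * V ^ ((2 : ℝ) / n) * ψ)
    (γ : ℝ) (hγ : γ ^ 2 = (n : ℝ) / (S₂ * β ^ 2 * E₁₂ + n)) :
    γ ^ 2 * S₂ * β ^ 2 * 4 ^ r₁₂ > 1 / (5 * V ^ ((2 : ℝ) / n) * ψ) ∧
    1 + (1 / 2) * Real.logb 2
        (2 * π * Real.exp 1 *
          ((γ ^ 2 * S₂ * β ^ 2 * 4 ^ r₁₂)⁻¹ * V ^ (-(2 : ℝ) / n) + ψ))
      < 1 + (1 / 2) * Real.logb 2 (2 * π * Real.exp 1 * (6 * ψ)) := by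
  have hnpos : (0:ℝ) < n := by exact_mod_cast hn
  have hVpos : 0 < V ^ ((2:ℝ)/n) := Real.rpow_pos_of_pos hV _
  set W : ℝ := V ^ ((2:ℝ)/n) * ψ with hWdef
  have hWpos : 0 < W := mul_pos hVpos hψ
  have hS₂pos : 0 < S₂ := lt_trans (Real.rpow_pos_of_pos (by norm_num) _) hS₂
  have hβpos : 0 < β ^ 2 := by rw [hβ]; exact div_pos hnpos hP0
  have h4r : (0:ℝ) < 4 ^ r₁₂ := by positivity
  have hDpos : 0 < S₂ * β ^ 2 * E₁₂ + n :=
    add_pos_of_nonneg_of_pos (mul_nonneg (mul_pos hS₂pos hβpos).le hE0) hnpos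
  -- key: P < 4 * W * S₂ * n * 4^r₁₂
  have hS4 : (4:ℝ) ^ ((n₂:ℝ) - 1) = 4 ^ n₂ / 4 := by
    rw [Real.rpow_sub (by norm_num), Real.rpow_natCast, Real.rpow_one]
  have h2 : (4:ℝ) ^ n₂ / 4 < S₂ := hS4 ▸ hS₂
  have h1 : (4:ℝ) ^ (m₁ + m₂) ≤ 4 ^ n₂ * 4 ^ r₁₂ := by
    rw [← pow_add]
    exact pow_le_pow_right₀ (by norm_num) (by omega)
  have hP' : P ≤ (n:ℝ) * 4 ^ (m₁ + m₂) * W := by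
    rw [hWdef]; nlinarith [hP]
  have key : P < 4 * W * S₂ * (n:ℝ) * 4 ^ r₁₂ := by
    nlinarith [mul_le_mul_of_nonneg_left h1 (mul_pos hnpos hWpos).le,
      mul_lt_mul_of_pos_left h2 (mul_pos (mul_pos (by norm_num : (0:ℝ) < 4) (mul_pos hnpos hWpos)) h4r)]
  have h3 : 1 < 4 * W * (S₂ * β ^ 2) * 4 ^ r₁₂ := by
    have heq : 4 * W * (S₂ * ((n:ℝ)/P)) * 4 ^ r₁₂ = (4 * W * S₂ * n * 4 ^ r₁₂) / P := by ring
    rw [hβ, heq, lt_div_iff₀ hP0, one_mul]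
    exact key
  have hE' : E₁₂ ≤ (n:ℝ) * 4 ^ r₁₂ * W := by rw [hWdef]; nlinarith [hE]
  have part1 : γ ^ 2 * S₂ * β ^ 2 * 4 ^ r₁₂ > 1 / (5 * V ^ ((2:ℝ)/n) * ψ) := by
    have h5W : 5 * V ^ ((2:ℝ)/n) * ψ = 5 * W := by rw [hWdef]; ring
    rw [h5W, hγ]
    have heq : (n:ℝ) / (S₂ * β ^ 2 * E₁₂ + n) * S₂ * β ^ 2 * 4 ^ r₁₂
        = ((n:ℝ) * (S₂ * β ^ 2 * 4 ^ r₁₂)) / (S₂ * β ^ 2 * E₁₂ + n) := by ring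
    rw [heq, gt_iff_lt, div_lt_div_iff₀ (by positivity) hDpos, one_mul]
    have hx : 0 < S₂ * β ^ 2 := mul_pos hS₂pos hβpos
    nlinarith [mul_le_mul_of_nonneg_left hE' hx.le,
      mul_lt_mul_of_pos_left h3 hnpos]
  refine ⟨part1, ?_⟩
  have hApos : 0 < γ ^ 2 * S₂ * β ^ 2 * 4 ^ r₁₂ :=
    lt_trans (by positivity) part1
  have hinv : (γ ^ 2 * S₂ * β ^ 2 * 4 ^ r₁₂)⁻¹ < 5 * V ^ ((2:ℝ)/n) * ψ := by
    have := (inv_lt_inv₀ hApos (by positivity : (0:ℝ) < 1 / (5 * V ^ ((2:ℝ)/n) * ψ))).mpr part1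
    rwa [one_div, inv_inv] at this
  have hVneg : V ^ (-(2:ℝ)/n) = (V ^ ((2:ℝ)/n))⁻¹ := by
    rw [neg_div, Real.rpow_neg hV.le]
  have harg : (γ ^ 2 * S₂ * β ^ 2 * 4 ^ r₁₂)⁻¹ * V ^ (-(2:ℝ)/n) + ψ < 6 * ψ := by
    have h5 : (5 * V ^ ((2:ℝ)/n) * ψ) * (V ^ ((2:ℝ)/n))⁻¹ = 5 * ψ := by
      field_simp
    have hmm := mul_lt_mul_of_pos_right hinv (inv_pos.mpr hVpos)
    rw [h5] at hmm
    rw [hVneg]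
    linarith
  have hc : 0 < 2 * π * Real.exp 1 :=
    mul_pos (mul_pos two_pos Real.pi_pos) (Real.exp_pos 1)
  have hvn : 0 < V ^ (-(2:ℝ)/n) := Real.rpow_pos_of_pos hV _
  have hpos1 : 0 < 2 * π * Real.exp 1 *
      ((γ ^ 2 * S₂ * β ^ 2 * 4 ^ r₁₂)⁻¹ * V ^ (-(2:ℝ)/n) + ψ) :=
    mul_pos hc (add_pos (mul_pos (inv_pos.mpr hApos) hvn) hψ)
  have hlog := Real.logb_lt_logb (by norm_num : (1:ℝ) < 2) hpos1
    (mul_lt_mul_of_pos_left harg hc)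
  linarith
end

section
/- Let ℓ₁ and ℓ₂ be two lines in ℝⁿ. Let a ≠ b be points on ℓ₁ and e ≠ f points on ℓ₂ such that ‖a − b‖ = ‖e − f‖ and d_p(a, b) ≤ d_p(e, f), where d_p(x, y) = ∏_{i=1}^{n} |x_i − y_i| is the product distance and ‖·‖ the Euclidean norm. Then for any two points a′, b′ on ℓ₁ and any two points e′, f′ on ℓ₂ satisfying ‖a′ − b′‖ = ‖e′ − f′‖, one has d_p(a′, b′) ≤ d_p(e′, f′). -/
lemma pdct_diff (n : ℕ) (u w : EuclideanSpace ℝ (Fin n)) (s t : ℝ) :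
    (u + s • w) - (u + t • w) = (s - t) • w := by
  rw [sub_smul]; abel

lemma pdct_prod (n : ℕ) (u w : EuclideanSpace ℝ (Fin n)) (s t : ℝ) :
    ∏ i, |(u + s • w) i - (u + t • w) i| = |s - t| ^ n * ∏ i, |w i| := by
  have h : ∀ i, (u + s • w) i - (u + t • w) i = (s - t) * w i := by
    intro i
    simp [PiLp.add_apply, PiLp.smul_apply]
    ring
  simp only [h, abs_mul, Finset.prod_mul_distrib, Finset.prod_const, Finset.card_univ,
    Fintype.card_fin]

lemma pdct_norm (n : ℕ) (u w : EuclideanSpace ℝ (Fin n)) (s t : ℝ) :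
    ‖(u + s • w) - (u + t • w)‖ = |s - t| * ‖w‖ := by
  rw [pdct_diff, norm_smul, Real.norm_eq_abs]

/-- **Transfer of product-distance comparison between two layers (Lemma D.3 of the thesis).**
Let `ℓ₁` be the line through `u₁` with direction `w₁` and `ℓ₂` the line through `u₂` with
direction `w₂` in `ℝⁿ`.  Let `a ≠ b` be points on `ℓ₁` and `e ≠ f` points on `ℓ₂` with
`‖a − b‖ = ‖e − f‖` and `d_p(a,b) ≤ d_p(e,f)`, where `d_p(x,y) = ∏ᵢ |xᵢ − yᵢ|` is the
product distance.  Then for any points `a′, b′` on `ℓ₁` and `e′, f′` on `ℓ₂` with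
`‖a′ − b′‖ = ‖e′ − f′‖`, one has `d_p(a′,b′) ≤ d_p(e′,f′)`. -/
theorem product_distance_comparison_transfer
    (n : ℕ) (u₁ w₁ u₂ w₂ : EuclideanSpace ℝ (Fin n))
    (a b e f : EuclideanSpace ℝ (Fin n)) (ta tb te tf : ℝ)
    (ha : a = u₁ + ta • w₁) (hb : b = u₁ + tb • w₁)
    (he : e = u₂ + te • w₂) (hf : f = u₂ + tf • w₂)
    (hab : a ≠ b) (hef : e ≠ f)
    (hE : ‖a - b‖ = ‖e - f‖)
    (hP : ∏ i, |a i - b i| ≤ ∏ i, |e i - f i|)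
    (a' b' e' f' : EuclideanSpace ℝ (Fin n)) (ta' tb' te' tf' : ℝ)
    (ha' : a' = u₁ + ta' • w₁) (hb' : b' = u₁ + tb' • w₁)
    (he' : e' = u₂ + te' • w₂) (hf' : f' = u₂ + tf' • w₂)
    (hE' : ‖a' - b'‖ = ‖e' - f'‖) :
    ∏ i, |a' i - b' i| ≤ ∏ i, |e' i - f' i| := by
  subst ha hb he hf ha' hb' he' hf'
  rw [pdct_prod, pdct_prod] at hP
  rw [pdct_prod]
  rw [pdct_prod (s := te') (t := tf')]
  rw [pdct_norm, pdct_norm] at hE hE'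
  set s := |ta - tb| with hs
  set r := |te - tf| with hr
  set s' := |ta' - tb'|
  set r' := |te' - tf'|
  have hs0 : 0 < s := abs_pos.mpr (by
    intro h
    apply hab
    rw [sub_eq_zero] at h
    rw [h])
  have hw1 : 0 < ‖w₁‖ := by
    rcases (norm_nonneg w₁).lt_or_eq with h | h
    · exact h
    · exfalso; apply hab
      have : w₁ = 0 := norm_eq_zero.mp h.symm
      rw [this]; simp
  have hw2 : 0 < ‖w₂‖ := by
    rcases (norm_nonneg w₂).lt_or_eq with h | h
    · exact h
    · exfalso; apply hef
      have : w₂ = 0 := norm_eq_zero.mp h.symm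
      rw [this]; simp
  have hr0 : 0 < r := by
    by_contra h
    push_neg at h
    have : r = 0 := le_antisymm h (abs_nonneg _)
    rw [this, zero_mul] at hE
    nlinarith
  -- r = s * ‖w₁‖ / ‖w₂‖, r' = s' * ‖w₁‖ / ‖w₂‖ so r' * s = s' * r
  have key : r' * s = s' * r := by
    have hc : (r' * s) * ‖w₂‖ = (s' * r) * ‖w₂‖ := by
      calc (r' * s) * ‖w₂‖ = s * (r' * ‖w₂‖) := by ring
        _ = s * (s' * ‖w₁‖) := by rw [← hE']
        _ = s' * (s * ‖w₁‖) := by ring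
        _ = s' * (r * ‖w₂‖) := by rw [hE]
        _ = (s' * r) * ‖w₂‖ := by ring
    exact mul_right_cancel₀ hw2.ne' hc
  -- goal: s'^n * P₁ ≤ r'^n * P₂, from s^n * P₁ ≤ r^n * P₂
  have hP1 : (0:ℝ) ≤ ∏ i, |w₁ i| := Finset.prod_nonneg fun i _ => abs_nonneg _
  have hP2 : (0:ℝ) ≤ ∏ i, |w₂ i| := Finset.prod_nonneg fun i _ => abs_nonneg _
  have hmul : (r' * s) ^ n = (s' * r) ^ n := by rw [key]
  have h1 : s' ^ n * (s ^ n * ∏ i, |w₁ i|) ≤ s' ^ n * (r ^ n * ∏ i, |w₂ i|) :=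
    mul_le_mul_of_nonneg_left hP (pow_nonneg (abs_nonneg _) n)
  have h2 : s' ^ n * r ^ n = r' ^ n * s ^ n := by
    rw [← mul_pow, ← mul_pow, ← key, mul_comm]
  calc s' ^ n * ∏ i, |w₁ i|
      = (s' ^ n * (s ^ n * ∏ i, |w₁ i|)) / s ^ n := by
        field_simp
    _ ≤ (s' ^ n * (r ^ n * ∏ i, |w₂ i|)) / s ^ n := by
        gcongr
    _ = (r' ^ n * s ^ n * ∏ i, |w₂ i|) / s ^ n := by rw [← mul_assoc, h2]
    _ = r' ^ n * ∏ i, |w₂ i| := by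
        field_simp
end

section
/- Let t ≥ 1 be an integer and set N = 2t + 2. Let M be an N × N matrix with entries in {0, 1} such that every row sum and every column sum is at least t + 1. Suppose there is a row r with row sum exactly t + 1 such that every column c with M_{r,c} = 1 has column sum at least t + 2. Then the complement matrix M′, obtained by flipping every entry of M, has at least t + 1 columns whose column sum is at most t. (Hence after restoring the code blocks and applying the all-flipping operation, at least t + 1 columns become correctable by the t-error-correcting component decoder; this is the key step showing the iterative bit-flipping decoder corrects every detectable (E = F = 2t+2) stall pattern with more than F(t+1)+t errors.) -/
/-- **All-flipping produces `t+1` decodable columns (core of Case 2 of Theorem 8.1-1).**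
Let `t ≥ 1`, `N = 2t+2`, and let `M` be an `N×N` `{0,1}`-matrix (entries given as `Bool`)
with every row sum and every column sum at least `t+1`.  Suppose some row `r` has row sum
exactly `t+1` and every column `c` with `M r c = 1` has column sum at least `t+2`.  Then
the complement matrix (obtained by flipping every entry) has at least `t+1` columns with
column sum at most `t`. -/
theorem stall_pattern_all_flip_light_columns
    (t : ℕ) (ht : 1 ≤ t)
    (M : Fin (2 * t + 2) → Fin (2 * t + 2) → Bool)
    (hrow : ∀ r, t + 1 ≤ (Finset.univ.filter fun c => M r c = true).card)
    (hcol : ∀ c, t + 1 ≤ (Finset.univ.filter fun r => M r c = true).card)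
    (r : Fin (2 * t + 2))
    (hr : (Finset.univ.filter fun c => M r c = true).card = t + 1)
    (hheavy : ∀ c, M r c = true →
      t + 2 ≤ (Finset.univ.filter fun r' => M r' c = true).card) :
    t + 1 ≤ (Finset.univ.filter fun c =>
        (Finset.univ.filter fun r' => M r' c = false).card ≤ t).card := by
  rw [← hr]
  apply Finset.card_le_card
  intro c hc
  simp only [Finset.mem_filter, Finset.mem_univ, true_and] at hc ⊢
  have hsplit : (Finset.univ.filter fun r' => M r' c = false).card
      + (Finset.univ.filter fun r' => M r' c = true).card = 2 * t + 2 := by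
    have := Finset.card_filter_add_card_filter_not
      (s := (Finset.univ : Finset (Fin (2 * t + 2)))) (p := fun r' => M r' c = true)
    simp only [Finset.card_univ, Fintype.card_fin, Bool.not_eq_true] at this
    omega
  have := hheavy c hc
  omega
end
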